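/- arXiv:2510.00929 — 3 statements merged into one kernel-verified Lean document; each statement's English description precedes it below -/
import Mathlib

section
/- Let G be a group of orthogonal matrices T_g on ℝ^n, φ : ℝ^n → ℝ^n a G-equivariant map, d : ℝ^m × ℝ^m → ℝ a differentiable data-fidelity function in its first argument, and γ ∈ ℝ. Define the unrolled iteration x_0(y, A) = 0 and x_{k+1}(y, A) = φ(x_k(y, A) − γ Aᵀ ∇₁d(A x_k(y, A), y)), where ∇₁d denotes the gradient of d with respect to its first argument. Then for every k, x_k(y, A T_g) = T_g⁻¹ x_k(y, A); in particular f(y, A) = x_L(y, A) is an equivariant reconstructor. -/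
open Matrix

/-!
Write `x ↦ x - γ Aᵀ ∇₁d(A x, y)` for the gradient step. For an orthogonal `Q`, replacing
`A` by `A Q` and `x` by `Qᵀ x` leaves `A x` unchanged and turns `Aᵀ` into `Qᵀ Aᵀ`, so the
gradient step intertwines with `Qᵀ = T g⁻¹`; equivariance of `φ` then carries this
through each iteration, by induction on `k` from `x₀ = 0`.
-/

section

variable {R ι κ : Type*} [CommRing R] [Fintype ι] [Fintype κ] [DecidableEq κ]

theorem map_inv_eq_transpose {G : Type*} [Group G] (T : G → Matrix κ κ R)
    (hT : ∀ g, (T g)ᵀ * T g = 1) (hT1 : T 1 = 1) (hTmul : ∀ g h, T g * T h = T (g * h))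
    (g : G) : T g⁻¹ = (T g)ᵀ := by
  have hleft : T g⁻¹ * T g = 1 := by rw [hTmul, inv_mul_cancel, hT1]
  exact (inv_eq_left_inv hleft).symm.trans (inv_eq_left_inv (hT g))

def gradStep (γ : R) (grad : (ι → R) → (ι → R) → (ι → R)) (y : ι → R)
    (A : Matrix ι κ R) (x : κ → R) : κ → R :=
  x - γ • Aᵀ *ᵥ grad (A *ᵥ x) y

theorem gradStep_mul_orthogonal (γ : R) (grad : (ι → R) → (ι → R) → (ι → R)) (y : ι → R)
    (A : Matrix ι κ R) {Q : Matrix κ κ R} (hQ : Q * Qᵀ = 1) (x : κ → R) :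
    gradStep γ grad y (A * Q) (Qᵀ *ᵥ x) = Qᵀ *ᵥ gradStep γ grad y A x := by
  have hAx : (A * Q) *ᵥ (Qᵀ *ᵥ x) = A *ᵥ x := by
    rw [mulVec_mulVec, Matrix.mul_assoc, hQ, Matrix.mul_one]
  rw [gradStep, gradStep, hAx, transpose_mul, ← mulVec_mulVec, mulVec_sub, mulVec_smul]

end

/-- The unrolled iteration x_0 = 0,
x_{k+1}(y,A) = φ(x_k(y,A) − γ Aᵀ ∇₁d(A x_k(y,A), y)), with φ G-equivariant,
satisfies x_k(y, A T_g) = T_{g⁻¹} x_k(y, A) for every k; in particular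
f(y,A) = x_L(y,A) is an equivariant reconstructor. -/
theorem stmt6 {G : Type*} [Group G] {m n : ℕ}
    (T : G → Matrix (Fin n) (Fin n) ℝ)
    (hT : ∀ g, (T g)ᵀ * T g = 1)
    (hT1 : T 1 = 1)
    (hTmul : ∀ g h, T g * T h = T (g * h))
    (φ : (Fin n → ℝ) → (Fin n → ℝ))
    (hφ : ∀ (g : G) (x : Fin n → ℝ), φ ((T g).mulVec x) = (T g).mulVec (φ x))
    (γ : ℝ)
    (grad : (Fin m → ℝ) → (Fin m → ℝ) → (Fin m → ℝ))  -- ∇₁d(·, ·)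
    (seq : (Fin m → ℝ) → Matrix (Fin m) (Fin n) ℝ → ℕ → (Fin n → ℝ))
    (h0 : ∀ y A, seq y A 0 = 0)
    (hstep : ∀ y A k, seq y A (k + 1) =
      φ (seq y A k - γ • Aᵀ.mulVec (grad (A.mulVec (seq y A k)) y))) :
    ∀ (k : ℕ) (y : Fin m → ℝ) (A : Matrix (Fin m) (Fin n) ℝ) (g : G),
      seq y (A * T g) k = (T g⁻¹).mulVec (seq y A k) := by
  intro k y A g
  have hinv := map_inv_eq_transpose T hT hT1 hTmul g
  have horth : T g * (T g)ᵀ = 1 := mul_eq_one_comm.mp (hT g)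
  have hφT : ∀ x, φ ((T g)ᵀ *ᵥ x) = (T g)ᵀ *ᵥ φ x := by simpa only [hinv] using hφ g⁻¹
  rw [hinv]
  induction k with
  | zero => simp [h0]
  | succ k ih =>
    rw [hstep, hstep, ih]
    exact (congrArg φ (gradStep_mul_orthogonal γ grad y A horth _)).trans (hφT _)
end

section
/- Let G be a finite group of orthogonal matrices T_g on ℝ^n, and suppose f(y₁, A₁) = Q₁† Q₁ E[x | y₁, A₁] + (I − Q₁†Q₁) v(y₁) for every split (y₁, A₁), where Q₁ := Q_{A₁} is symmetric PSD. If Q̄_A := E_{A₁|A}[Q_{A₁}] is invertible, then the averaged estimator f̄(y, A) := E_{y₁,A₁|y,A}[Q̄_A⁻¹ Q_{A₁} f(y₁, A₁)] satisfies f̄(y, A) = E_{y₁,A₁|y,A}[Q̄_A⁻¹ Q_{A₁} E[x | y₁, A₁]]. -/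
open Matrix BigOperators

/-- B is the Moore–Penrose pseudoinverse of A: the four Penrose conditions. -/
def IsMoorePenrose {n : ℕ} (A B : Matrix (Fin n) (Fin n) ℝ) : Prop :=
  A * B * A = A ∧ B * A * B = B ∧ (A * B)ᵀ = A * B ∧ (B * A)ᵀ = B * A

namespace Matrix

variable {m n R : Type*} [Fintype m] [Fintype n] [DecidableEq n] [Ring R]

theorem mul_one_sub_mul_eq_zero {A : Matrix m n R} {B : Matrix n m R} (h : A * B * A = A) :
    A * (1 - B * A) = 0 := by
  rw [Matrix.mul_sub, Matrix.mul_one, ← Matrix.mul_assoc, h, sub_self]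

theorem mulVec_mul_mulVec_add_one_sub_mul_mulVec {A : Matrix m n R} {B : Matrix n m R}
    (h : A * B * A = A) (x y : n → R) :
    A *ᵥ ((B * A) *ᵥ x + (1 - B * A) *ᵥ y) = A *ᵥ x := by
  rw [mulVec_add, mulVec_mulVec, mulVec_mulVec, ← Matrix.mul_assoc, h,
    mul_one_sub_mul_eq_zero h, zero_mulVec, add_zero]

end Matrix

theorem stmt13_general {n : ℕ} {ι : Type*} [Fintype ι]
    (p : ι → ℝ)
    (Q : ι → Matrix (Fin n) (Fin n) ℝ)
    (Qd : ι → Matrix (Fin n) (Fin n) ℝ) (hQd : ∀ j, IsMoorePenrose (Q j) (Qd j))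
    (e v : ι → Fin n → ℝ)
    (f : ι → Fin n → ℝ)
    (hf : ∀ j, f j = (Qd j * Q j).mulVec (e j) +
      ((1 : Matrix (Fin n) (Fin n) ℝ) - Qd j * Q j).mulVec (v j))
    (Qbar : Matrix (Fin n) (Fin n) ℝ) :
    ∑ j, p j • (Qbar⁻¹ * Q j).mulVec (f j) = ∑ j, p j • (Qbar⁻¹ * Q j).mulVec (e j) := by
  refine Finset.sum_congr rfl fun j _ => ?_
  rw [← mulVec_mulVec, ← mulVec_mulVec, hf j,
    mulVec_mul_mulVec_add_one_sub_mul_mulVec (hQd j).1]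

/-- Proposition 1 of the paper: if each split estimator has the form
f₁ = Q₁†Q₁ E[x|y₁,A₁] + (I − Q₁†Q₁) v(y₁) and Q̄ = E[Q₁] is invertible, then the averaged
estimator f̄ = E[Q̄⁻¹ Q₁ f₁] equals the convex combination E[Q̄⁻¹ Q₁ E[x|y₁,A₁]]
(the arbitrary nullspace components are annihilated). -/
theorem stmt13 {n : ℕ} {ι : Type*} [Fintype ι]
    (p : ι → ℝ) (hp : ∀ j, 0 ≤ p j) (hp1 : ∑ j, p j = 1)
    (Q : ι → Matrix (Fin n) (Fin n) ℝ) (hQ : ∀ j, (Q j).PosSemidef)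
    (Qd : ι → Matrix (Fin n) (Fin n) ℝ) (hQd : ∀ j, IsMoorePenrose (Q j) (Qd j))
    (e v : ι → Fin n → ℝ)
    (f : ι → Fin n → ℝ)
    (hf : ∀ j, f j = (Qd j * Q j).mulVec (e j) +
      ((1 : Matrix (Fin n) (Fin n) ℝ) - Qd j * Q j).mulVec (v j))
    (Qbar : Matrix (Fin n) (Fin n) ℝ) (hQbar : Qbar = ∑ j, p j • Q j)
    (hinv : IsUnit Qbar) :
    ∑ j, p j • (Qbar⁻¹ * Q j).mulVec (f j) = ∑ j, p j • (Qbar⁻¹ * Q j).mulVec (e j) :=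
  stmt13_general p Q Qd hQd e v f hf Qbar
end

section
/- Under the assumptions that the law of x is G-invariant, the law of A is G-invariant under right multiplication by T_g, x and A are independent, and p(y | A, x) = p(y | Ax), the MMSE reconstructor f(y, A) = E[x | y, A] is equivariant: f(y, A T_g) = T_g⁻¹ f(y, A) for all y, A, g. -/
/-!
By the invariance of `px` and `pA`, the posterior weight at `A * T g` is the one at `A`
precomposed with `T g`. An orthogonal change of variables (which preserves Lebesgue measure, as
`|det (T g)| = 1`) moves `T g` out of the posterior mean as `(T g)ᵀ = T g⁻¹`.
-/

open Matrix MeasureTheory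

namespace Matrix

variable {ι : Type*} [Fintype ι] [DecidableEq ι] {Q : Matrix ι ι ℝ}

theorem abs_det_eq_one_of_transpose_mul_self (hQ : Qᵀ * Q = 1) : |Q.det| = 1 := by
  have h : Q.det * Q.det = 1 := by simpa [det_mul, det_transpose] using congrArg det hQ
  exact (abs_eq zero_le_one).2 (mul_self_eq_one_iff.1 h)

noncomputable def orthogonalCLE (hQ : Qᵀ * Q = 1) : (ι → ℝ) ≃L[ℝ] (ι → ℝ) :=
  (Q.toLinearEquiv' (invertibleOfLeftInverse Q Qᵀ hQ)).toContinuousLinearEquiv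

@[simp]
theorem orthogonalCLE_apply (hQ : Qᵀ * Q = 1) (x : ι → ℝ) : orthogonalCLE hQ x = Q *ᵥ x := rfl

theorem measurePreserving_mulVec_of_transpose_mul_self (hQ : Qᵀ * Q = 1) :
    MeasurePreserving (Q *ᵥ ·) volume volume := by
  have hdet := abs_det_eq_one_of_transpose_mul_self hQ
  have hdet0 : Q.det ≠ 0 := fun h => by simp [h] at hdet
  refine ⟨(orthogonalCLE hQ).continuous.measurable, ?_⟩
  have hmap := Real.map_matrix_volume_pi_eq_smul_volume_pi hdet0
  rwa [abs_inv, hdet, inv_one, ENNReal.ofReal_one, one_smul] at hmap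

theorem integral_comp_mulVec_of_transpose_mul_self {E : Type*} [NormedAddCommGroup E]
    [NormedSpace ℝ E] (hQ : Qᵀ * Q = 1) (F : (ι → ℝ) → E) :
    ∫ x, F (Q *ᵥ x) = ∫ x, F x :=
  (measurePreserving_mulVec_of_transpose_mul_self hQ).integral_comp
    (orthogonalCLE hQ).toHomeomorph.measurableEmbedding F

end Matrix

/-- Mean of the probability density proportional to `w`: with `w` the unnormalized posterior
density, this is the conditional mean given by Bayes' rule. -/
noncomputable def posteriorMean {ι : Type*} [Fintype ι] (w : (ι → ℝ) → ℝ) : ι → ℝ :=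
  (∫ x, w x)⁻¹ • ∫ x, w x • x

theorem posteriorMean_comp_mulVec {ι : Type*} [Fintype ι] [DecidableEq ι] {Q : Matrix ι ι ℝ}
    (hQ : Qᵀ * Q = 1) (w : (ι → ℝ) → ℝ) :
    posteriorMean (fun x => w (Q *ᵥ x)) = Qᵀ *ᵥ posteriorMean w := by
  have hQQt : Q * Qᵀ = 1 := mul_eq_one_comm.1 hQ
  have hQt : Qᵀᵀ * Qᵀ = 1 := by rwa [transpose_transpose]
  have hfirst : ∫ x, w (Q *ᵥ x) • x = Qᵀ *ᵥ ∫ x, w x • x :=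
    calc ∫ x, w (Q *ᵥ x) • x = ∫ x, w (Q *ᵥ (Qᵀ *ᵥ x)) • (Qᵀ *ᵥ x) :=
          (integral_comp_mulVec_of_transpose_mul_self hQt (fun x => w (Q *ᵥ x) • x)).symm
      _ = ∫ x, orthogonalCLE hQt (w x • x) := by
          simp [mulVec_mulVec, hQQt]
      _ = Qᵀ *ᵥ ∫ x, w x • x := (orthogonalCLE hQt).integral_comp_comm _
  rw [posteriorMean, posteriorMean, integral_comp_mulVec_of_transpose_mul_self hQ, hfirst,
    mulVec_smul]

/-- part 5 of Theorem 2: under a G-invariant signal density px, an operator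
density pA invariant under right multiplication by T_g, and a likelihood depending on (A,x)
only through A x, the MMSE reconstructor written via Bayes' rule,
f(y, A) = (∫ ℓ(y|Ax) pA(A) px(x) dx)⁻¹ • ∫ (ℓ(y|Ax) pA(A) px(x)) • x dx,
is equivariant: f(y, A T_g) = T_{g⁻¹} f(y, A). -/
theorem stmt18 {G : Type*} [Group G] {n m : ℕ}
    (T : G → Matrix (Fin n) (Fin n) ℝ)
    (hT : ∀ g, (T g)ᵀ * T g = 1)
    (hT1 : T 1 = 1)
    (hTmul : ∀ g h, T g * T h = T (g * h))
    (px : (Fin n → ℝ) → ℝ) (hpx : ∀ (g : G) (x : Fin n → ℝ), px ((T g).mulVec x) = px x)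
    (pA : Matrix (Fin m) (Fin n) ℝ → ℝ)
    (hpA : ∀ (A : Matrix (Fin m) (Fin n) ℝ) (g : G), pA (A * T g) = pA A)
    (ℓ : (Fin m → ℝ) → (Fin m → ℝ) → ℝ)  -- likelihood p(y | A x)
    (f : (Fin m → ℝ) → Matrix (Fin m) (Fin n) ℝ → (Fin n → ℝ))
    (hf : ∀ y A, f y A =
      (∫ x : Fin n → ℝ, ℓ y (A.mulVec x) * pA A * px x)⁻¹ •
        ∫ x : Fin n → ℝ, (ℓ y (A.mulVec x) * pA A * px x) • x) :
    ∀ (y : Fin m → ℝ) (A : Matrix (Fin m) (Fin n) ℝ) (g : G),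
      f y (A * T g) = (T g⁻¹).mulVec (f y A) := by
  intro y A g
  have hTinv : T g⁻¹ = (T g)ᵀ :=
    calc T g⁻¹ = T g⁻¹ * (T g * (T g)ᵀ) := by rw [mul_eq_one_comm.1 (hT g), Matrix.mul_one]
      _ = (T g)ᵀ := by rw [← Matrix.mul_assoc, hTmul, inv_mul_cancel, hT1, Matrix.one_mul]
  set w : (Fin n → ℝ) → ℝ := fun u => ℓ y (A *ᵥ u) * pA A * px u
  have hweight : (fun x => ℓ y ((A * T g) *ᵥ x) * pA (A * T g) * px x) = fun x => w (T g *ᵥ x) := by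
    funext x
    simp only [w, hpA, hpx, mulVec_mulVec]
  calc f y (A * T g) = posteriorMean fun x => ℓ y ((A * T g) *ᵥ x) * pA (A * T g) * px x :=
        hf y _
    _ = (T g)ᵀ *ᵥ posteriorMean w := by rw [hweight, posteriorMean_comp_mulVec (hT g)]
    _ = T g⁻¹ *ᵥ f y A := by rw [hTinv, hf]; rfl
end
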